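/- arXiv:2204.11055 — 5 statements merged into one kernel-verified Lean document; each statement's English description precedes it below -/
import Mathlib

section
/- For every (n,m) ∈ N̂₀² and every (n,m)-permutation ρ ∈ S_{n,m}, the word â_{n,m}[ρ] = (∏_{i=1}^n z_i t_i)(∏_{i=1}^{n+m} z_{iρ})(∏_{i=n+1}^{n+m} t_i z_i) (the word obtained from a_{n,m}[ρ] by deleting both occurrences of the letter x) is an isoterm for the factor monoid M(xzxyty): every word w such that M(xzxyty) satisfies the identity â_{n,m}[ρ] ≈ w equals â_{n,m}[ρ]. -/
/-! ## Words over a countably infinite alphabet -/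

/-- `Word` is the free monoid `F` over the countably infinite alphabet `X = ℕ`. -/
abbrev Word : Type := FreeMonoid ℕ

/-- The letter with index `i`, as a one-letter word. -/
def ltr (i : ℕ) : Word := FreeMonoid.of i

/-- The distinguished letters `x`, `y`, `z`, `t`, `s`. -/
def wx : Word := ltr 0
def wy : Word := ltr 1
def wz : Word := ltr 2
def wt : Word := ltr 3
def ws : Word := ltr 4

/-- The letters `z_i` for `i ≥ 1` (distinct from `x,y,z,t,s` and from all `t_j`). -/
def wzi (i : ℕ) : Word := ltr (2 * i + 10)

/-- The letters `t_i` for `i ≥ 1`. -/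
def wti (i : ℕ) : Word := ltr (2 * i + 11)

/-- `pr a len f = f (a+1) * f (a+2) * ⋯ * f (a+len)`, i.e. `∏_{i=a+1}^{a+len} f i`. -/
def pr (a len : ℕ) (f : ℕ → Word) : Word :=
  ((List.range len).map (fun i => f (a + 1 + i))).prod

/-- The word `u` read from right to left. -/
def revW (u : Word) : Word := FreeMonoid.ofList (FreeMonoid.toList u).reverse

/-- `ρ : ℕ → ℕ` is (restricts to) a permutation of `{1,…,N}`. -/
def IsPermOn (ρ : ℕ → ℕ) (N : ℕ) : Prop :=
  Set.BijOn ρ (Set.Icc 1 N) (Set.Icc 1 N)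

/-- `ρ` is a `(p,q)`-permutation: a permutation of `{1,…,p+q}` such that for each
`i = 1,…,p+q-1` exactly one of `ρ i`, `ρ (i+1)` lies in `{1,…,p}`. -/
def IsPQPerm (ρ : ℕ → ℕ) (p q : ℕ) : Prop :=
  IsPermOn ρ (p + q) ∧
    ∀ i : ℕ, 1 ≤ i → i < p + q → (ρ i ∈ Set.Icc 1 p ↔ ¬ ρ (i + 1) ∈ Set.Icc 1 p)

/-- `(n,m) ∈ N̂₀²`, i.e. `|n - m| ≤ 1`. -/
def InHatN (n m : ℕ) : Prop := n ≤ m + 1 ∧ m ≤ n + 1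

/-! ## The words `a_{n,m}[ρ]`, `c_{n,m,k}[τ]`, `d_{n,m,k}[τ]` and friends -/

/-- `a_{n,m}[ρ] = (∏_{i=1}^n z_i t_i) x (∏_{i=1}^{n+m} z_{iρ}) x (∏_{i=n+1}^{n+m} t_i z_i)`. -/
def wordA (n m : ℕ) (ρ : ℕ → ℕ) : Word :=
  pr 0 n (fun i => wzi i * wti i) * wx * pr 0 (n + m) (fun i => wzi (ρ i)) * wx *
    pr n m (fun i => wti i * wzi i)

/-- `a'_{n,m}[ρ] = (∏_{i=1}^n z_i t_i) x² (∏_{i=1}^{n+m} z_{iρ}) (∏_{i=n+1}^{n+m} t_i z_i)`. -/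
def wordA' (n m : ℕ) (ρ : ℕ → ℕ) : Word :=
  pr 0 n (fun i => wzi i * wti i) * (wx * wx) * pr 0 (n + m) (fun i => wzi (ρ i)) *
    pr n m (fun i => wti i * wzi i)

/-- `â_{n,m}[ρ]`: the word `a_{n,m}[ρ]` with both occurrences of `x` deleted. -/
def hatA (n m : ℕ) (ρ : ℕ → ℕ) : Word :=
  pr 0 n (fun i => wzi i * wti i) * pr 0 (n + m) (fun i => wzi (ρ i)) *
    pr n m (fun i => wti i * wzi i)

/-- `c_{n,m,k}[τ]`. -/
def wordC (n m k : ℕ) (τ : ℕ → ℕ) : Word :=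
  pr 0 n (fun i => wzi i * wti i) * (wx * wy * wt) * pr n m (fun i => wzi i * wti i) * wx *
    pr 0 (n + m + k) (fun i => wzi (τ i)) * wy * pr (n + m) k (fun i => wti i * wzi i)

/-- `c'_{n,m,k}[τ]` (the factor `xyt` of `c_{n,m,k}[τ]` replaced by `yxt`). -/
def wordC' (n m k : ℕ) (τ : ℕ → ℕ) : Word :=
  pr 0 n (fun i => wzi i * wti i) * (wy * wx * wt) * pr n m (fun i => wzi i * wti i) * wx *
    pr 0 (n + m + k) (fun i => wzi (τ i)) * wy * pr (n + m) k (fun i => wti i * wzi i)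

/-- `d_{n,m,k}[τ]`: the word `c_{n,m,k}[τ]` read from right to left. -/
def wordD (n m k : ℕ) (τ : ℕ → ℕ) : Word := revW (wordC n m k τ)

/-- `d'_{n,m,k}[τ]`: the word `c'_{n,m,k}[τ]` read from right to left. -/
def wordD' (n m k : ℕ) (τ : ℕ → ℕ) : Word := revW (wordC' n m k τ)

/-! ## Fully invariant congruences -/

/-- `θ` is a fully invariant congruence on the free monoid `F`. -/
structure IsFIC (θ : Word → Word → Prop) : Prop where
  refl : ∀ u, θ u u
  symm : ∀ {u v}, θ u v → θ v u
  trans : ∀ {u v w}, θ u v → θ v w → θ u w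
  mul : ∀ {u₁ v₁ u₂ v₂}, θ u₁ v₁ → θ u₂ v₂ → θ (u₁ * u₂) (v₁ * v₂)
  subst : ∀ (σ : Word →* Word) {u v}, θ u v → θ (σ u) (σ v)

/-- Containment of binary relations (sets of identities). -/
def RelLe (S θ : Word → Word → Prop) : Prop := ∀ u v, S u v → θ u v

/-- `⟨S⟩`: the least fully invariant congruence containing the set `S` of identities. -/
def ficGen (S : Word → Word → Prop) : Word → Word → Prop :=
  fun u v => ∀ θ : Word → Word → Prop, IsFIC θ → RelLe S θ → θ u v

/-- Intersection of two relations: the meet in the lattice of fully invariant congruences. -/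
def RelMeet (θ₁ θ₂ : Word → Word → Prop) : Word → Word → Prop := fun u v => θ₁ u v ∧ θ₂ u v

/-- The join of two fully invariant congruences. -/
def ficJoin (θ₁ θ₂ : Word → Word → Prop) : Word → Word → Prop :=
  ficGen (fun u v => θ₁ u v ∨ θ₂ u v)

/-- The lattice of all fully invariant congruences on `F` containing `θ` is distributive
(meets in this lattice are intersections, joins are generated joins). -/
def FICLatDistrib (θ : Word → Word → Prop) : Prop :=
  ∀ a b c : Word → Word → Prop, IsFIC a → IsFIC b → IsFIC c →
    RelLe θ a → RelLe θ b → RelLe θ c →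
      ∀ u v, RelMeet a (ficJoin b c) u v ↔ ficJoin (RelMeet a b) (RelMeet a c) u v

/-- The lattice of all fully invariant congruences on `F` containing `θ` is modular. -/
def FICLatModular (θ : Word → Word → Prop) : Prop :=
  ∀ a b c : Word → Word → Prop, IsFIC a → IsFIC b → IsFIC c →
    RelLe θ a → RelLe θ b → RelLe θ c → RelLe a c →
      ∀ u v, ficJoin a (RelMeet b c) u v ↔ RelMeet (ficJoin a b) c u v

/-! ## Satisfaction and factor monoids -/

/-- The monoid `M` satisfies the identity `u ≈ v`. -/
def MSat (M : Type) [Monoid M] (u v : Word) : Prop := ∀ f : Word →* M, f u = f v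

/-- The underlying type of the factor monoid `M(w)`: all factors (contiguous subwords)
of `w` together with an extra zero element (`none`). -/
abbrev Factor (w : List ℕ) : Type := Option { u : List ℕ // u <:+: w }

namespace Factor

variable {w : List ℕ}

instance : One (Factor w) := ⟨some ⟨[], List.nil_infix⟩⟩

instance : Mul (Factor w) :=
  ⟨fun a b =>
    match a, b with
    | none, _ => none
    | some _, none => none
    | some u, some v => if h : (u.1 ++ v.1) <:+: w then some ⟨u.1 ++ v.1, h⟩ else none⟩

theorem none_mul (a : Factor w) : (none : Factor w) * a = none := rfl

theorem mul_none (a : Factor w) : a * (none : Factor w) = none := by cases a <;> rfl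

theorem some_mul_some (u v : { u : List ℕ // u <:+: w }) :
    (some u : Factor w) * some v =
      if h : (u.1 ++ v.1) <:+: w then some ⟨u.1 ++ v.1, h⟩ else none := rfl

theorem one_def : (1 : Factor w) = some ⟨[], List.nil_infix⟩ := rfl

private theorem infix_left {u v : List ℕ} (h : (u ++ v) <:+: w) : u <:+: w :=
  (List.prefix_append u v).isInfix.trans h

private theorem infix_right {u v : List ℕ} (h : (u ++ v) <:+: w) : v <:+: w :=
  (List.suffix_append u v).isInfix.trans h

instance : Monoid (Factor w) where
  mul_assoc a b c := by
    rcases a with _ | u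
    · simp [none_mul]
    rcases b with _ | v
    · rw [mul_none, none_mul, mul_none]
    rcases c with _ | t
    · rw [mul_none, mul_none, mul_none]
    by_cases h : (u.1 ++ (v.1 ++ t.1)) <:+: w
    · have h' : ((u.1 ++ v.1) ++ t.1) <:+: w := by rwa [List.append_assoc]
      have huv : (u.1 ++ v.1) <:+: w := by
        refine infix_left (v := t.1) ?_; rwa [List.append_assoc]
      have hvt : (v.1 ++ t.1) <:+: w := infix_right h
      rw [some_mul_some u v, dif_pos huv, some_mul_some v t, dif_pos hvt,
        some_mul_some, dif_pos h', some_mul_some, dif_pos h]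
      exact congrArg some (Subtype.ext (List.append_assoc _ _ _))
    · have h' : ¬ ((u.1 ++ v.1) ++ t.1) <:+: w := by rwa [List.append_assoc]
      rw [some_mul_some u v, some_mul_some v t]
      by_cases huv : (u.1 ++ v.1) <:+: w
      · rw [dif_pos huv]
        by_cases hvt : (v.1 ++ t.1) <:+: w
        · rw [dif_pos hvt, some_mul_some, dif_neg h', some_mul_some, dif_neg h]
        · rw [dif_neg hvt, some_mul_some, dif_neg h', mul_none]
      · rw [dif_neg huv, none_mul]
        by_cases hvt : (v.1 ++ t.1) <:+: w
        · rw [dif_pos hvt, some_mul_some, dif_neg h]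
        · rw [dif_neg hvt, mul_none]
  one_mul a := by
    rcases a with _ | u
    · rw [mul_none]
    · rw [one_def, some_mul_some, dif_pos (by simpa using u.2)]
      exact congrArg some (Subtype.ext (List.nil_append _))
  mul_one a := by
    rcases a with _ | u
    · rw [none_mul]
    · rw [one_def, some_mul_some, dif_pos (by simpa using u.2)]
      exact congrArg some (Subtype.ext (List.append_nil _))

end Factor

/-- `Th(M(w))`: the set of identities holding in the factor monoid `M(w)`. -/
def ThFM (w : List ℕ) : Word → Word → Prop :=
  fun u v => ∀ f : Word →* Factor w, f u = f v

/-! ## Distinguished identities and sets of identities -/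

/-- The identity `α : xzytxy ≈ xzytyx` (as a pair of words). -/
def idAlphaL : Word := wx * wz * wy * wt * wx * wy
def idAlphaR : Word := wx * wz * wy * wt * wy * wx

/-- The identity `β : xzxyty ≈ xzyxty`. -/
def idBetaL : Word := wx * wz * wx * wy * wt * wy
def idBetaR : Word := wx * wz * wy * wx * wt * wy

/-- The set of identities defining the variety `N`:
`{x² ≈ x³, x²y ≈ yx², xyxzx ≈ x²yz, α, β}`. -/
def SigmaN : Word → Word → Prop := fun u v =>
  (u = wx ^ 2 ∧ v = wx ^ 3) ∨
  (u = wx ^ 2 * wy ∧ v = wy * wx ^ 2) ∨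
  (u = wx * wy * wx * wz * wx ∧ v = wx ^ 2 * wy * wz) ∨
  (u = idAlphaL ∧ v = idAlphaR) ∨
  (u = idBetaL ∧ v = idBetaR)

/-- `θ_N = ⟨Σ_N⟩`: the fully invariant congruence of the variety `N`. -/
def thetaN : Word → Word → Prop := ficGen SigmaN

/-- The set `Σ_P(n)` of identities defining the variety `P_n`. -/
def SigmaP (n : ℕ) : Word → Word → Prop := fun u v =>
  (u = wx ^ n ∧ v = wx ^ (n + 1)) ∨
  (u = wx ^ 2 * wy ∧ v = wy * wx ^ 2) ∨
  (∃ (k l : ℕ) (ρ : ℕ → ℕ), IsPermOn ρ (k + l) ∧ u = wordA k l ρ ∧ v = wordA' k l ρ) ∨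
  (∃ (k l m : ℕ) (τ : ℕ → ℕ), IsPermOn τ (k + l + m) ∧ u = wordC k l m τ ∧ v = wordC' k l m τ) ∨
  (∃ (k l m : ℕ) (τ : ℕ → ℕ), IsPermOn τ (k + l + m) ∧ u = wordD k l m τ ∧ v = wordD' k l m τ)

/-- The set `Σ_Q(n) = {x^n ≈ x^{n+1}, x^n y ≈ y x^n, x²y ≈ xyx}`. -/
def SigmaQ (n : ℕ) : Word → Word → Prop := fun u v =>
  (u = wx ^ n ∧ v = wx ^ (n + 1)) ∨
  (u = wx ^ n * wy ∧ v = wy * wx ^ n) ∨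
  (u = wx ^ 2 * wy ∧ v = wx * wy * wx)

/-- The set `Σ_R(n) = {x^n ≈ x^{n+1}, x²y ≈ yx², α, β}`. -/
def SigmaR (n : ℕ) : Word → Word → Prop := fun u v =>
  (u = wx ^ n ∧ v = wx ^ (n + 1)) ∨
  (u = wx ^ 2 * wy ∧ v = wy * wx ^ 2) ∨
  (u = idAlphaL ∧ v = idAlphaR) ∨
  (u = idBetaL ∧ v = idBetaR)

/-- `Σ^δ`: the set of reversed identities (both sides read from right to left). -/
def SigmaDual (S : Word → Word → Prop) : Word → Word → Prop :=
  fun u v => ∃ a b, S a b ∧ u = revW a ∧ v = revW b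

/-- Left-hand side of the identity `δ_{n,m}`: `x^m t₁ x t₂ x ⋯ t_n x`. -/
def deltaL (n m : ℕ) : Word := wx ^ m * ((List.range n).map (fun i => wti (i + 1) * wx)).prod

/-- Right-hand side of the identity `δ_{n,m}`: `x^{m+n} t₁ t₂ ⋯ t_n`. -/
def deltaR (n m : ℕ) : Word := wx ^ (m + n) * ((List.range n).map (fun i => wti (i + 1))).prod

/-- The word `x^{e₀} ∏_{i=1}^r (t_i x^{e_i})`. -/
def wordE (r : ℕ) (e : ℕ → ℕ) : Word :=
  wx ^ (e 0) * ((List.range r).map (fun i => wti (i + 1) * wx ^ (e (i + 1)))).prod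

/-- The word `x^{e₀} y^{f₀} ∏_{i=1}^r (t_i x^{e_i} y^{f_i})`. -/
def wordEF (r : ℕ) (e f : ℕ → ℕ) : Word :=
  wx ^ (e 0) * wy ^ (f 0) *
    ((List.range r).map (fun i => wti (i + 1) * wx ^ (e (i + 1)) * wy ^ (f (i + 1)))).prod

/-- The word `y^{f₀} x^{e₀} ∏_{i=1}^r (t_i x^{e_i} y^{f_i})`. -/
def wordEF' (r : ℕ) (e f : ℕ → ℕ) : Word :=
  wy ^ (f 0) * wx ^ (e 0) *
    ((List.range r).map (fun i => wti (i + 1) * wx ^ (e (i + 1)) * wy ^ (f (i + 1)))).prod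

/-! ## Aperiodicity and central idempotents -/

/-- The subset `S` of `M` is a subsemigroup which is a group under the induced
multiplication. -/
def IsGroupSubsemigroup {M : Type} [Monoid M] (S : Set M) : Prop :=
  (∀ a ∈ S, ∀ b ∈ S, a * b ∈ S) ∧
    ∃ e ∈ S, (∀ a ∈ S, e * a = a ∧ a * e = a) ∧ ∀ a ∈ S, ∃ b ∈ S, a * b = e ∧ b * a = e

/-- `M` is aperiodic: every subsemigroup of `M` which is a group under the induced
multiplication is a singleton. -/
def Aperiodic (M : Type) [Monoid M] : Prop :=
  ∀ S : Set M, IsGroupSubsemigroup S → ∃ a, S = {a}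

/-- `M` has central idempotents. -/
def CentralIdempotents (M : Type) [Monoid M] : Prop :=
  ∀ e : M, e * e = e → ∀ a : M, e * a = a * e



/-!
Suppose `M(xzxyty)` satisfies `â ≈ v`, where `â = â_{n,m}[ρ]`. A renaming that sends letters to
letters of `xzxyty` or deletes them induces a homomorphism into `M(xzxyty)`; so whenever it maps
`â` or `v` onto a factor of `xzxyty`, it maps both onto the same word. Applied to the projections
of `â` and `v` onto the letters `z_i t_i z_j t_j` of two indices, finitely many such renamings
pin down the projection of `v`, except that for two indices on the same side of `n` the relative
order of one pair of occurrences of `z_i` and `z_j` is left open. It is settled by the index `h`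
whose `z_h` directly follows the earlier of `z_i, z_j` in the middle factor: since `ρ` is an
`(n,m)`-permutation, `h` lies on the other side of `n`, and the already determined projections
onto `z_i z_h` and onto `z_j z_h` force the order. A word is determined by its projections onto
pairs of letters, so `v = â`.
-/

namespace Factor

variable {w : List ℕ}

noncomputable def ofList (w l : List ℕ) : Factor w :=
  if h : l <:+: w then some ⟨l, h⟩ else none

theorem ofList_nil : ofList w [] = 1 := by
  rw [ofList, dif_pos List.nil_infix]; rfl

theorem ofList_append (l l' : List ℕ) : ofList w (l ++ l') = ofList w l * ofList w l' := by
  by_cases h : l ++ l' <:+: w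
  · have hl : l <:+: w := (List.prefix_append l l').isInfix.trans h
    have hl' : l' <:+: w := (List.suffix_append l l').isInfix.trans h
    rw [ofList, ofList, ofList, dif_pos h, dif_pos hl, dif_pos hl', some_mul_some, dif_pos h]
  · rw [ofList, dif_neg h]
    by_cases hl : l <:+: w
    · by_cases hl' : l' <:+: w
      · rw [ofList, ofList, dif_pos hl, dif_pos hl', some_mul_some, dif_neg h]
      · rw [ofList, ofList, dif_pos hl, dif_neg hl', mul_none]
    · rw [ofList, dif_neg hl, none_mul]

theorem eq_of_ofList_eq {l l' : List ℕ} (h : l <:+: w) (he : ofList w l = ofList w l') :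
    l = l' := by
  by_cases h' : l' <:+: w
  · rw [ofList, ofList, dif_pos h, dif_pos h'] at he
    exact congrArg Subtype.val (Option.some_injective _ he)
  · rw [ofList, ofList, dif_pos h, dif_neg h'] at he
    exact absurd he (Option.some_ne_none _)

noncomputable def renameHom (w : List ℕ) (σ : ℕ → Option ℕ) : Word →* Factor w :=
  FreeMonoid.lift fun a => ofList w (σ a).toList

theorem renameHom_apply (σ : ℕ → Option ℕ) (u : Word) :
    renameHom w σ u = ofList w (u.toList.filterMap σ) := by
  induction u using FreeMonoid.inductionOn' with
  | one => exact (map_one _).trans ofList_nil.symm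
  | of_mul a u ih =>
    rw [map_mul, ih, FreeMonoid.toList_mul, FreeMonoid.toList_of, List.singleton_append,
      List.filterMap_cons]
    cases h : σ a <;> simp [renameHom, h, ← ofList_append]

end Factor

def AgreeOnFactors {α : Type*} (w : List ℕ) (G H : List α) : Prop :=
  ∀ s : α → Option ℕ, G.filterMap s <:+: w ∨ H.filterMap s <:+: w → G.filterMap s = H.filterMap s

theorem ThFM.agreeOnFactors {w : List ℕ} {u v : Word} (h : ThFM w u v) :
    AgreeOnFactors w u.toList v.toList := by
  intro s hs
  have he : Factor.ofList w (u.toList.filterMap s) = Factor.ofList w (v.toList.filterMap s) := by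
    simpa only [Factor.renameHom_apply] using h (Factor.renameHom w s)
  rcases hs with hs | hs
  · exact Factor.eq_of_ofList_eq hs he
  · exact (Factor.eq_of_ofList_eq hs he.symm).symm

namespace AgreeOnFactors

variable {α β : Type*} {w : List ℕ} {G H : List α}

theorem filterMap (h : AgreeOnFactors w G H) (e : α → Option β) :
    AgreeOnFactors w (G.filterMap e) (H.filterMap e) := by
  intro s
  simpa only [List.filterMap_filterMap] using h _

theorem filterMap_eq (h : AgreeOnFactors w G H) (s : α → Option ℕ)
    (hs : G.filterMap s <:+: w) : H.filterMap s = G.filterMap s :=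
  (h s (.inl hs)).symm

theorem forall_filterMap_eq (h : AgreeOnFactors w G H) {S : List (α → Option ℕ)}
    (hS : ∀ s ∈ S, G.filterMap s <:+: w) : ∀ s ∈ S, H.filterMap s = G.filterMap s :=
  fun s hs => h.filterMap_eq s (hS s hs)

theorem filterMap_ne (h : AgreeOnFactors w G H) (s : α → Option ℕ) {L : List ℕ}
    (hL : L <:+: w) (hG : G.filterMap s ≠ L) : H.filterMap s ≠ L := fun hH =>
  hG ((h s (.inr (hH ▸ hL))).trans hH)

end AgreeOnFactors

namespace List

variable {α β : Type*}

theorem eq_of_forall_filter_pair_eq [DecidableEq α] {l l' : List α}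
    (h : ∀ x y, l.filter (fun z => z = x ∨ z = y) = l'.filter (fun z => z = x ∨ z = y)) :
    l = l' := by
  induction l generalizing l' with
  | nil =>
    cases l' with
    | nil => rfl
    | cons b _ => simpa using h b b
  | cons a t ih =>
    cases l' with
    | nil => simpa using h a a
    | cons b t' =>
      obtain rfl : a = b := (by simpa [List.filter_cons] using h a b : a = b ∧ _).1
      refine congrArg _ (ih fun x y => ?_)
      by_cases ha : a = x ∨ a = y <;> simpa [List.filter_cons, ha] using h x y

theorem length_eq_length_filterMap_add {l : List α} {s t : α → Option β}
    (h : ∀ x ∈ l, (s x).isSome = !(t x).isSome) :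
    l.length = (l.filterMap s).length + (l.filterMap t).length := by
  rw [length_filterMap_eq_countP, length_filterMap_eq_countP,
    length_eq_countP_add_countP (fun x => (s x).isSome)]
  congr 1
  refine countP_congr fun x hx => ?_
  have := h x hx
  revert this
  cases s x <;> cases t x <;> simp

@[elab_as_elim]
theorem forall_of_length_eq_six {k : ℕ} {p : List ℕ → Prop} (H : List ℕ)
    (h : ∀ a b c d e f : Fin k, p [a, b, c, d, e, f]) (hlen : H.length = 6)
    (hH : ∀ x ∈ H, x < k) : p H := by
  match H, hlen with
  | [a, b, c, d, e, f], _ =>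
    simp only [mem_cons, not_mem_nil, or_false, forall_eq_or_imp, forall_eq] at hH
    exact h ⟨a, hH.1⟩ ⟨b, hH.2.1⟩ ⟨c, hH.2.2.1⟩ ⟨d, hH.2.2.2.1⟩ ⟨e, hH.2.2.2.2.1⟩ ⟨f, hH.2.2.2.2.2⟩

theorem flatMap_eq_flatMap_filter {l : List α} {f : α → List β} (p : α → Bool)
    (h : ∀ a ∈ l, f a ≠ [] → p a) : l.flatMap f = (l.filter p).flatMap f := by
  induction l with
  | nil => rfl
  | cons a l ih =>
    have ih' := ih fun b hb => h b (mem_cons_of_mem a hb)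
    by_cases hp : p a
    · simp [hp, ih']
    · simp [hp, ih', not_not.1 (mt (h a mem_cons_self) hp)]

theorem filter_range'_mem {S : List ℕ} (hS : S.Pairwise (· < ·)) (s N : ℕ) :
    (range' s N).filter (· ∈ S) = S.filter (fun k => s ≤ k ∧ k < s + N) :=
  ((pairwise_lt_range' (s := s) (n := N)).filter _).eq_of_mem_iff (hS.filter _) fun k => by
    simp [mem_range'_1, and_comm]

theorem filter_range'_mem_pair {i j : ℕ} (hij : i ≠ j) (s N : ℕ) :
    (range' s N).filter (· ∈ [i, j]) =
      (if i < j then [i, j] else [j, i]).filter (fun k => s ≤ k ∧ k < s + N) := by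
  split_ifs with h
  · exact filter_range'_mem (by simpa using h) s N
  · rw [← filter_range'_mem (by simp; omega)]
    exact filter_congr fun k _ => by simp [or_comm]

end List

section Projection

variable {α : Type*} [DecidableEq α]

def proj (L l : List α) : List ℕ := l.filterMap (List.idxOf? · L)

theorem proj_append (L l l' : List α) : proj L (l ++ l') = proj L l ++ proj L l' :=
  List.filterMap_append

theorem proj_flatMap {β : Type*} (L : List α) (l : List β) (f : β → List α) :
    proj L (l.flatMap f) = l.flatMap (fun b => proj L (f b)) :=
  List.filterMap_flatMap

theorem proj_eq_nil {L l : List α} (h : ∀ x ∈ l, x ∉ L) : proj L l = [] :=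
  List.filterMap_eq_nil_iff.2 fun x hx => List.idxOf?_eq_none_iff.2 (h x hx)

theorem lt_length_of_mem_proj {L l : List α} {k : ℕ} (hk : k ∈ proj L l) : k < L.length := by
  obtain ⟨x, -, hx⟩ := List.mem_filterMap.1 hk
  exact (List.idxOf?_eq_some_iff.1 hx).1

theorem filterMap_getElem?_proj (L l : List α) :
    (proj L l).filterMap (L[·]?) = l.filter (· ∈ L) := by
  induction l with
  | nil => rfl
  | cons x l ih =>
    by_cases hx : x ∈ L
    · obtain ⟨k, hk⟩ := Option.isSome_iff_exists.1 (List.isSome_idxOf?.2 hx)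
      obtain ⟨hkL, hLk, -⟩ := List.idxOf?_eq_some_iff.1 hk
      simp [proj, hk, hx, List.getElem?_eq_getElem hkL, hLk, ← ih]
    · simp [proj, List.idxOf?_eq_none_iff.2 hx, hx, ← ih]

theorem proj_proj {L L' : List α} {K : List ℕ} (hL : L.Nodup) (hK : ∀ k ∈ K, k < L.length)
    (hL' : K.filterMap (L[·]?) = L') (l : List α) : proj K (proj L l) = proj L' l := by
  subst hL'
  refine List.filterMap_filterMap.trans (List.filterMap_congr fun x _ => ?_)
  induction K with
  | nil => cases List.idxOf? x L <;> rfl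
  | cons k K ih =>
    have hk : k < L.length := hK k (by simp)
    have ih' := ih fun k' hk' => hK k' (by simp [hk'])
    simp only [List.filterMap_cons, List.getElem?_eq_getElem hk, List.idxOf?_cons] at ih' ⊢
    cases hx : List.idxOf? x L with
    | none =>
      have : L[k] ≠ x := fun h => List.idxOf?_eq_none_iff.1 hx (h ▸ List.getElem_mem hk)
      rw [hx, Option.bind_none] at ih'
      simp [this, ← ih']
    | some p =>
      obtain ⟨hp, hLp, -⟩ := List.idxOf?_eq_some_iff.1 hx
      have : L[k] = x ↔ k = p := by rw [← hLp, hL.getElem_inj_iff]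
      rw [hx, Option.bind_some] at ih'
      simp [this, ← ih']

theorem filter_mem_eq_of_proj_eq {L l l' : List α} (h : proj L l = proj L l') :
    l.filter (· ∈ L) = l'.filter (· ∈ L) := by
  rw [← filterMap_getElem?_proj, h, filterMap_getElem?_proj]

theorem eq_of_forall_proj_eq {l l' : List α} (hsub : ∀ x ∈ l', x ∈ l)
    (h : ∀ x ∈ l, ∀ y ∈ l, ∃ L, x ∈ L ∧ y ∈ L ∧ proj L l = proj L l') : l = l' := by
  have hpair : ∀ x ∈ l, ∀ y ∈ l,
      l.filter (fun z => z = x ∨ z = y) = l'.filter (fun z => z = x ∨ z = y) := by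
    intro x hx y hy
    obtain ⟨L, hxL, hyL, hL⟩ := h x hx y hy
    have key := congrArg (List.filter fun z => decide (z = x ∨ z = y))
      (filter_mem_eq_of_proj_eq hL)
    simp only [List.filter_filter] at key
    convert key using 2 <;> grind
  have absent : ∀ {x y : α}, x ∉ l → ∀ k : List α, (∀ z ∈ k, z ∈ l) →
      k.filter (fun z => z = x ∨ z = y) = k.filter (fun z => z = y ∨ z = y) ∧
        k.filter (fun z => z = y ∨ z = x) = k.filter (fun z => z = y ∨ z = y) :=
    fun hx k hk => ⟨List.filter_congr (by grind), List.filter_congr (by grind)⟩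
  refine List.eq_of_forall_filter_pair_eq fun x y => ?_
  by_cases hx : x ∈ l <;> by_cases hy : y ∈ l
  · exact hpair x hx y hy
  · rw [(absent hy l fun _ => id).2, (absent hy l' hsub).2]
    exact hpair x hx x hx
  · rw [(absent hx l fun _ => id).1, (absent hx l' hsub).1]
    exact hpair y hy y hy
  · rw [List.filter_eq_nil_iff.2 (by grind), List.filter_eq_nil_iff.2 (by grind)]

end Projection

/-- The letters `x, y, z, t` are `0, 1, 2, 3`, so for instance `rename [some 0, some 2]` below
renames `0, 1` into `x, z`. -/
abbrev xzxyty : List ℕ := [0, 2, 0, 1, 3, 1]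

def rename (img : List (Option ℕ)) (x : ℕ) : Option ℕ := img.getD x none

/-- The projection of `â_{n,m}[ρ]` onto `z_i t_i z_j t_j`, renamed into `0 1 2 3`, when `z_i`
precedes `z_j` in the middle factor. In the lemma names below, `pre` and `suf` record whether
`i` and `j` are at most `n` (then `z_i t_i` occurs in the prefix) or not (then `t_i z_i` occurs
in the suffix), and `lt` and `gt` compare `i` with `j`. -/
def pairPattern (n i j : ℕ) : List ℕ :=
  if i ≤ n then
    if j ≤ n then (if i < j then [0, 1, 2, 3, 0, 2] else [2, 3, 0, 1, 0, 2]) else [0, 1, 0, 2, 3, 2]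
  else
    if j ≤ n then [2, 3, 0, 2, 1, 0] else (if i < j then [0, 2, 1, 0, 3, 2] else [0, 2, 3, 2, 1, 0])

section Patterns

variable {P H : List ℕ}

theorem length_eq_six_of_agreeOnFactors (hP : P.filterMap (rename [some 0, some 2]) = [0, 2, 0])
    (hP' : P.filterMap (rename [none, none, some 0, some 2]) = [0, 2, 0])
    (hH : ∀ x ∈ H, x < 4) (h : AgreeOnFactors xzxyty P H) : H.length = 6 := by
  rw [List.length_eq_length_filterMap_add (s := rename [some 0, some 2])
    (t := rename [none, none, some 0, some 2]) fun x hx => ?_,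
    h.filterMap_eq _ (by rw [hP]; decide), h.filterMap_eq _ (by rw [hP']; decide), hP, hP']
  · rfl
  · have := hH x hx
    interval_cases x <;> rfl

theorem eq_of_agreeOnFactors_single (hH : ∀ x ∈ H, x < 2)
    (h : AgreeOnFactors xzxyty [0, 1, 0] H) : H = [0, 1, 0] := by
  have e := h.filterMap_eq (rename [some 0, some 2]) (by decide)
  rw [List.filterMap_congr (g := some ∘ (2 * ·)) fun x hx => ?_, List.filterMap_eq_map] at e
  · exact List.map_injective_iff.2 (fun x y hxy => by simpa using hxy) e
  · have := hH x hx
    interval_cases x <;> rfl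

theorem eq_of_agreeOnFactors_pre_suf (hH : ∀ x ∈ H, x < 4)
    (h : AgreeOnFactors xzxyty [0, 1, 0, 2, 3, 2] H) : H = [0, 1, 0, 2, 3, 2] := by
  have hS := h.forall_filterMap_eq (S := [rename [some 0, some 2, some 1, some 3]]) (by decide)
  revert hS
  refine List.forall_of_length_eq_six H ?_ (length_eq_six_of_agreeOnFactors rfl rfl hH h) hH
  decide +kernel

theorem eq_of_agreeOnFactors_suf_pre (hH : ∀ x ∈ H, x < 4)
    (h : AgreeOnFactors xzxyty [2, 3, 0, 2, 1, 0] H) : H = [2, 3, 0, 2, 1, 0] := by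
  have hS := h.forall_filterMap_eq (S := [rename [none, some 1, some 0, some 2],
    rename [some 1, some 3, none, some 0]]) (by decide)
  -- rules out `[2, 3, 2, 0, 1, 0]`, which this renaming sends onto `xzxyty`
  have hW := h.filterMap_ne (rename [some 1, some 3, some 0, some 2]) List.infix_rfl (by decide)
  revert hS hW
  refine List.forall_of_length_eq_six H ?_ (length_eq_six_of_agreeOnFactors rfl rfl hH h) hH
  decide +kernel

theorem eq_of_agreeOnFactors_pre_pre_lt (hH : ∀ x ∈ H, x < 4)
    (h : AgreeOnFactors xzxyty [0, 1, 2, 3, 0, 2] H)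
    (hlast : (proj [0, 2] H).getLast? = some 1) : H = [0, 1, 2, 3, 0, 2] := by
  have hS := h.forall_filterMap_eq (S := [rename [some 0, some 2],
    rename [none, none, some 0, some 2], rename [none, some 0, some 1, some 3],
    rename [some 0, none, none, some 2]]) (by decide)
  revert hS hlast
  refine List.forall_of_length_eq_six H ?_ (length_eq_six_of_agreeOnFactors rfl rfl hH h) hH
  decide +kernel

theorem eq_of_agreeOnFactors_pre_pre_gt (hH : ∀ x ∈ H, x < 4)
    (h : AgreeOnFactors xzxyty [2, 3, 0, 1, 0, 2] H)
    (hlast : (proj [0, 2] H).getLast? = some 1) : H = [2, 3, 0, 1, 0, 2] := by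
  have hS := h.forall_filterMap_eq (S := [rename [some 0, some 2],
    rename [none, none, some 0, some 2], rename [some 1, some 3, none, some 0],
    rename [none, some 2, some 0, none]]) (by decide)
  revert hS hlast
  refine List.forall_of_length_eq_six H ?_ (length_eq_six_of_agreeOnFactors rfl rfl hH h) hH
  decide +kernel

theorem eq_of_agreeOnFactors_suf_suf_lt (hH : ∀ x ∈ H, x < 4)
    (h : AgreeOnFactors xzxyty [0, 2, 1, 0, 3, 2] H)
    (hhead : (proj [0, 2] H).head? = some 0) : H = [0, 2, 1, 0, 3, 2] := by
  have hS := h.forall_filterMap_eq (S := [rename [some 0, some 2],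
    rename [none, none, some 0, some 2], rename [some 0, some 2, none, some 1],
    rename [none, some 2, some 0, none]]) (by decide)
  revert hS hhead
  refine List.forall_of_length_eq_six H ?_ (length_eq_six_of_agreeOnFactors rfl rfl hH h) hH
  decide +kernel

theorem eq_of_agreeOnFactors_suf_suf_gt (hH : ∀ x ∈ H, x < 4)
    (h : AgreeOnFactors xzxyty [0, 2, 3, 2, 1, 0] H)
    (hhead : (proj [0, 2] H).head? = some 0) : H = [0, 2, 3, 2, 1, 0] := by
  have hS := h.forall_filterMap_eq (S := [rename [some 0, some 2],
    rename [none, none, some 0, some 2], rename [none, some 1, some 0, some 2],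
    rename [some 0, none, none, some 2]]) (by decide)
  revert hS hhead
  refine List.forall_of_length_eq_six H ?_ (length_eq_six_of_agreeOnFactors rfl rfl hH h) hH
  decide +kernel

theorem eq_pairPattern_of_agreeOnFactors {n i j : ℕ} (hH : ∀ x ∈ H, x < 4)
    (h : AgreeOnFactors xzxyty (pairPattern n i j) H)
    (hpre : i ≤ n → j ≤ n → (proj [0, 2] H).getLast? = some 1)
    (hsuf : ¬i ≤ n → ¬j ≤ n → (proj [0, 2] H).head? = some 0) : H = pairPattern n i j := by
  unfold pairPattern at h ⊢
  split_ifs at h ⊢ with hi hj hlt hj hlt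
  · exact eq_of_agreeOnFactors_pre_pre_lt hH h (hpre hi hj)
  · exact eq_of_agreeOnFactors_pre_pre_gt hH h (hpre hi hj)
  · exact eq_of_agreeOnFactors_pre_suf hH h
  · exact eq_of_agreeOnFactors_suf_pre hH h
  · exact eq_of_agreeOnFactors_suf_suf_lt hH h (hsuf hi hj)
  · exact eq_of_agreeOnFactors_suf_suf_gt hH h (hsuf hi hj)

end Patterns

section Separation

variable {l : List ℕ} {x y z : ℕ}

theorem length_proj_triple (hL : [x, y, z].Nodup) (h₁ : (proj [x, z] l).length = 4)
    (h₂ : (proj [y] l).length = 2) : (proj [x, y, z] l).length = 6 := by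
  rw [List.length_eq_length_filterMap_add (s := (List.idxOf? · [0, 2]))
    (t := (List.idxOf? · [1])) fun k hk => ?_]
  · change (proj [0, 2] _).length + (proj [1] _).length = 6
    rw [proj_proj hL (L' := [x, z]) (by simp) rfl, proj_proj hL (L' := [y]) (by simp) rfl, h₁, h₂]
  · have : k < 3 := lt_length_of_mem_proj hk
    interval_cases k <;> rfl

/-- All `x` precede all `z`, and some `z` precedes the last `y`; so the last `y` comes after
the last `x`. -/
theorem getLast?_proj_of_separated (hL : [x, y, z].Nodup)
    (h₁ : proj [x, z] l = [0, 0, 1, 1]) (h₂ : proj [y, z] l = [0, 1, 0, 1]) :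
    (proj [x, y] l).getLast? = some 1 := by
  have e₁ : proj [0, 2] (proj [x, y, z] l) = [0, 0, 1, 1] := (proj_proj hL (by simp) rfl l).trans h₁
  have e₂ : proj [1, 2] (proj [x, y, z] l) = [0, 1, 0, 1] := (proj_proj hL (by simp) rfl l).trans h₂
  have hlen := length_proj_triple hL (by rw [h₁]; rfl)
    (by rw [← proj_proj (L := [y, z]) (K := [0]) (L' := [y]) hL.of_cons (by simp) rfl, h₂]; rfl)
  rw [← proj_proj hL (K := [0, 1]) (L' := [x, y]) (by simp) rfl]
  revert e₁ e₂
  refine List.forall_of_length_eq_six (k := 3) _ ?_ hlen fun k hk => lt_length_of_mem_proj hk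
  decide +kernel

/-- Some `x` precedes the last `z`, and all `z` precede all `y`; so the first `x` comes before
the first `y`. -/
theorem head?_proj_of_separated (hL : [x, y, z].Nodup)
    (h₁ : proj [x, z] l = [1, 0, 1, 0]) (h₂ : proj [y, z] l = [1, 1, 0, 0]) :
    (proj [x, y] l).head? = some 0 := by
  have e₁ : proj [0, 2] (proj [x, y, z] l) = [1, 0, 1, 0] := (proj_proj hL (by simp) rfl l).trans h₁
  have e₂ : proj [1, 2] (proj [x, y, z] l) = [1, 1, 0, 0] := (proj_proj hL (by simp) rfl l).trans h₂
  have hlen := length_proj_triple hL (by rw [h₁]; rfl)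
    (by rw [← proj_proj (L := [y, z]) (K := [0]) (L' := [y]) hL.of_cons (by simp) rfl, h₂]; rfl)
  rw [← proj_proj hL (K := [0, 1]) (L' := [x, y]) (by simp) rfl]
  revert e₁ e₂
  refine List.forall_of_length_eq_six (k := 3) _ ?_ hlen fun k hk => lt_length_of_mem_proj hk
  decide +kernel

end Separation

section HatA

variable {n m : ℕ} {ρ : ℕ → ℕ}

def letterZ (k : ℕ) : ℕ := 2 * k + 10

def letterT (k : ℕ) : ℕ := 2 * k + 11

@[simp] theorem letterZ_inj {k l : ℕ} : letterZ k = letterZ l ↔ k = l := by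
  unfold letterZ; omega

@[simp] theorem letterT_inj {k l : ℕ} : letterT k = letterT l ↔ k = l := by
  unfold letterT; omega

@[simp] theorem letterZ_ne_letterT {k l : ℕ} : letterZ k ≠ letterT l := by
  unfold letterZ letterT; omega

@[simp] theorem letterT_ne_letterZ {k l : ℕ} : letterT k ≠ letterZ l :=
  letterZ_ne_letterT.symm

theorem toList_pr (a len : ℕ) (f : ℕ → Word) :
    (pr a len f).toList = (List.range' (a + 1) len).flatMap fun k => (f k).toList := by
  rw [pr, FreeMonoid.toList_prod, List.range'_eq_map_range, List.flatMap_map, List.map_map,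
    List.flatMap_def]
  rfl

theorem toList_hatA (n m : ℕ) (ρ : ℕ → ℕ) :
    (hatA n m ρ).toList =
      (List.range' 1 n).flatMap (fun k => [letterZ k, letterT k]) ++
        ((List.range' 1 (n + m)).map ρ).flatMap (fun k => [letterZ k]) ++
        (List.range' (n + 1) m).flatMap (fun k => [letterT k, letterZ k]) := by
  simp only [hatA, FreeMonoid.toList_mul, toList_pr, List.flatMap_map]
  rfl

theorem proj_flatMap_index (I l : List ℕ) {blk : ℕ → List ℕ}
    (hblk : ∀ k, ∀ x ∈ blk k, x = letterZ k ∨ x = letterT k) :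
    proj (I.flatMap fun k => [letterZ k, letterT k]) (l.flatMap blk) =
      (l.filter (· ∈ I)).flatMap fun k =>
        proj (I.flatMap fun k => [letterZ k, letterT k]) (blk k) := by
  rw [proj_flatMap, List.flatMap_eq_flatMap_filter]
  intro k _ hk
  by_contra hkI
  refine hk (proj_eq_nil fun x hx => ?_)
  rcases hblk k x hx with rfl | rfl <;> simpa using hkI

theorem filter_map_range'_mem {N : ℕ} (hρ : IsPermOn ρ N) {A B : List ℕ}
    (hA : A.Pairwise (· < ·)) (hAN : ∀ a ∈ A, 1 ≤ a ∧ a ≤ N) (hB : A.map ρ = B) :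
    ((List.range' 1 N).map ρ).filter (· ∈ B) = B := by
  subst hB
  rw [List.filter_map]
  congr 1
  rw [List.filter_congr (q := (· ∈ A)), List.filter_range'_mem hA, List.filter_eq_self]
  · intro a ha
    have := hAN a ha
    simp only [decide_eq_true_eq]; omega
  · intro k hk
    have hk' : k ∈ Set.Icc 1 N := by rw [List.mem_range'_1] at hk; exact ⟨hk.1, by omega⟩
    simp only [Function.comp, List.mem_map, decide_eq_decide]
    exact ⟨fun ⟨a, ha, he⟩ => hρ.injOn (Set.mem_Icc.2 (hAN a ha)) hk' he ▸ ha,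
      fun hkA => ⟨k, hkA, rfl⟩⟩

theorem proj_hatA_single (hρ : IsPermOn ρ (n + m)) {a : ℕ} (ha : 1 ≤ a) (ha' : a ≤ n + m) :
    proj [letterZ (ρ a), letterT (ρ a)] (hatA n m ρ).toList = [0, 1, 0] := by
  obtain ⟨hi, hi'⟩ := hρ.mapsTo (Set.mem_Icc.2 ⟨ha, ha'⟩)
  change proj ([ρ a].flatMap fun k => [letterZ k, letterT k]) _ = _
  rw [toList_hatA, proj_append, proj_append, proj_flatMap_index _ _ (by simp),
    proj_flatMap_index _ _ (by simp), proj_flatMap_index _ _ (by simp),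
    filter_map_range'_mem hρ (A := [a]) (B := [ρ a]) (by simp) (by simp [ha, ha']) rfl,
    List.filter_range'_mem (by simp), List.filter_range'_mem (by simp)]
  rcases le_or_gt (ρ a) n with hA | hA
  · simp [hi, Nat.lt_one_add_iff, hA, not_lt.2 hA, proj, List.idxOf?_cons]
  · simp [hi, Nat.lt_one_add_iff, hA, not_le.2 hA, show ρ a < n + 1 + m by omega, proj,
      List.idxOf?_cons]

theorem proj_hatA_pair (hρ : IsPermOn ρ (n + m)) {a b : ℕ} (ha : 1 ≤ a) (hab : a < b)
    (hb : b ≤ n + m) :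
    proj [letterZ (ρ a), letterT (ρ a), letterZ (ρ b), letterT (ρ b)] (hatA n m ρ).toList =
      pairPattern n (ρ a) (ρ b) := by
  have ha' : a ∈ Set.Icc 1 (n + m) := ⟨ha, by omega⟩
  have hb' : b ∈ Set.Icc 1 (n + m) := ⟨by omega, hb⟩
  obtain ⟨hi, hi'⟩ := hρ.mapsTo ha'
  obtain ⟨hj, hj'⟩ := hρ.mapsTo hb'
  have hij : ρ a ≠ ρ b := fun h => hab.ne (hρ.injOn ha' hb' h)
  change proj ([ρ a, ρ b].flatMap fun k => [letterZ k, letterT k]) _ = _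
  rw [toList_hatA, proj_append, proj_append, proj_flatMap_index _ _ (by simp),
    proj_flatMap_index _ _ (by simp), proj_flatMap_index _ _ (by simp),
    filter_map_range'_mem hρ (A := [a, b]) (B := [ρ a, ρ b]) (by simp [hab])
      (by simp; omega) rfl,
    List.filter_range'_mem_pair hij, List.filter_range'_mem_pair hij]
  have hpre : ∀ k, 1 ≤ k → (1 ≤ k ∧ k < 1 + n ↔ k ≤ n) := by omega
  have hsuf : ∀ k, k ≤ n + m → (n + 1 ≤ k ∧ k < n + 1 + m ↔ ¬k ≤ n) := by omega
  rcases lt_or_gt_of_ne hij with h | h <;>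
    by_cases hA : ρ a ≤ n <;> by_cases hB : ρ b ≤ n <;>
    simp only [List.filter_cons, List.filter_nil, hpre _ hi, hpre _ hj, hsuf _ hi', hsuf _ hj',
      hA, hB, h, h.not_gt, decide_true, decide_false, not_true_eq_false, not_false_eq_true,
      if_true, if_false, Bool.false_eq_true, pairPattern] <;>
    simp [proj, List.idxOf?_cons, hij]

end HatA

theorem IsPQPerm.le_iff_not_le_succ {ρ : ℕ → ℕ} {p q a : ℕ} (hρ : IsPQPerm ρ p q) (ha : 1 ≤ a)
    (ha' : a < p + q) : ρ a ≤ p ↔ ¬ρ (a + 1) ≤ p := by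
  have h := hρ.2 a ha ha'
  have h₁ := hρ.1.mapsTo (Set.mem_Icc.2 ⟨ha, ha'.le⟩)
  have h₂ := hρ.1.mapsTo (Set.mem_Icc.2 ⟨by omega, ha'⟩)
  simp only [Set.mem_Icc] at h h₁ h₂
  tauto

section Isoterm

variable {n m : ℕ} {ρ : ℕ → ℕ} {v : Word}

theorem exists_pos_of_mem_hatA (hρ : IsPermOn ρ (n + m)) {x : ℕ} (hx : x ∈ (hatA n m ρ).toList) :
    ∃ a, 1 ≤ a ∧ a ≤ n + m ∧ (x = letterZ (ρ a) ∨ x = letterT (ρ a)) := by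
  suffices ∃ k, 1 ≤ k ∧ k ≤ n + m ∧ (x = letterZ k ∨ x = letterT k) by
    obtain ⟨k, hk, hk', hxk⟩ := this
    obtain ⟨a, ⟨ha, ha'⟩, rfl⟩ := hρ.surjOn (Set.mem_Icc.2 ⟨hk, hk'⟩)
    exact ⟨a, ha, ha', hxk⟩
  rw [toList_hatA] at hx
  simp only [List.mem_append, List.mem_flatMap, List.mem_range'_1, List.mem_map, List.mem_cons,
    List.not_mem_nil, or_false] at hx
  rcases hx with (⟨k, hk, hxk⟩ | ⟨k, ⟨a, ha, rfl⟩, hxk⟩) | ⟨k, hk, hxk⟩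
  · exact ⟨k, hk.1, by omega, hxk⟩
  · obtain ⟨h₁, h₂⟩ := hρ.mapsTo (Set.mem_Icc.2 ⟨ha.1, by omega⟩)
    exact ⟨ρ a, h₁, h₂, .inl hxk⟩
  · exact ⟨k, by omega, by omega, hxk.symm⟩

theorem mem_hatA_of_mem (hv : AgreeOnFactors xzxyty (hatA n m ρ).toList v.toList) {x : ℕ}
    (hx : x ∈ v.toList) : x ∈ (hatA n m ρ).toList := by
  by_contra hxu
  have hu : proj [x] (hatA n m ρ).toList = [] :=
    proj_eq_nil fun y hy hyx => hxu (by rwa [List.mem_singleton.1 hyx] at hy)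
  have h := hv.filterMap_eq _ (hu ▸ List.nil_infix)
  rw [show (hatA n m ρ).toList.filterMap _ = [] from hu] at h
  simpa using List.filterMap_eq_nil_iff.1 h x hx

theorem proj_single_eq (hv : AgreeOnFactors xzxyty (hatA n m ρ).toList v.toList)
    (hρ : IsPermOn ρ (n + m)) {a : ℕ} (ha : 1 ≤ a) (ha' : a ≤ n + m) :
    proj [letterZ (ρ a), letterT (ρ a)] v.toList =
      proj [letterZ (ρ a), letterT (ρ a)] (hatA n m ρ).toList := by
  have h := hv.filterMap (List.idxOf? · [letterZ (ρ a), letterT (ρ a)])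
  change AgreeOnFactors _ (proj _ _) (proj _ _) at h
  rw [proj_hatA_single hρ ha ha'] at h ⊢
  exact eq_of_agreeOnFactors_single (fun x hx => lt_length_of_mem_proj hx) h

theorem proj_pair_eq_of_mixed (hv : AgreeOnFactors xzxyty (hatA n m ρ).toList v.toList)
    (hρ : IsPermOn ρ (n + m)) {a b : ℕ} (ha : 1 ≤ a) (hab : a < b) (hb : b ≤ n + m)
    (hmix : ρ a ≤ n ↔ ¬ρ b ≤ n) :
    proj [letterZ (ρ a), letterT (ρ a), letterZ (ρ b), letterT (ρ b)] v.toList =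
      pairPattern n (ρ a) (ρ b) := by
  have h := hv.filterMap
    (List.idxOf? · [letterZ (ρ a), letterT (ρ a), letterZ (ρ b), letterT (ρ b)])
  change AgreeOnFactors _ (proj _ _) (proj _ _) at h
  rw [proj_hatA_pair hρ ha hab hb] at h
  exact eq_pairPattern_of_agreeOnFactors (fun x hx => lt_length_of_mem_proj hx) h (by tauto)
    (by tauto)

/-- Since `ρ` is an `(n,m)`-permutation, `ρ (a + 1)` lies on the other side of `n` than `ρ a` and
`ρ b`, so the projections of `v` onto its `z` together with `z_{ρ a}` and with `z_{ρ b}` are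
already known. -/
theorem proj_letterZ_pair_of_same (hv : AgreeOnFactors xzxyty (hatA n m ρ).toList v.toList)
    (hρ : IsPQPerm ρ n m) {a b : ℕ} (ha : 1 ≤ a) (hab : a < b) (hb : b ≤ n + m)
    (hsame : ρ a ≤ n ↔ ρ b ≤ n) :
    (ρ a ≤ n → (proj [letterZ (ρ a), letterZ (ρ b)] v.toList).getLast? = some 1) ∧
      (¬ρ a ≤ n → (proj [letterZ (ρ a), letterZ (ρ b)] v.toList).head? = some 0) := by
  have halt := hρ.le_iff_not_le_succ ha (by omega)
  have hab' : a + 1 < b := by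
    rcases (Nat.succ_le_of_lt hab).lt_or_eq with h | rfl
    · exact h
    · tauto
  have hne : ∀ {k l : ℕ}, 1 ≤ k → k < l → l ≤ n + m → ρ k ≠ ρ l := fun hk hkl hl h =>
    hkl.ne (hρ.1.injOn (Set.mem_Icc.2 ⟨hk, by omega⟩) (Set.mem_Icc.2 ⟨by omega, hl⟩) h)
  have h₁ := hne ha (Nat.lt_add_one a) (by omega)
  have h₂ := hne (by omega) hab' hb
  have hnd : [letterZ (ρ a), letterZ (ρ b), letterZ (ρ (a + 1))].Nodup := by
    simp [h₁, h₂.symm, hne ha hab hb]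
  have f₁ : proj [letterZ (ρ a), letterZ (ρ (a + 1))] v.toList =
      proj [0, 2] (pairPattern n (ρ a) (ρ (a + 1))) := by
    rw [← proj_pair_eq_of_mixed hv hρ.1 ha (Nat.lt_add_one a) (by omega) halt,
      proj_proj (L' := [letterZ (ρ a), letterZ (ρ (a + 1))]) (by simp [h₁]) (by simp) rfl]
  have f₂ : proj [letterZ (ρ b), letterZ (ρ (a + 1))] v.toList =
      proj [2, 0] (pairPattern n (ρ (a + 1)) (ρ b)) := by
    rw [← proj_pair_eq_of_mixed hv hρ.1 (by omega) hab' hb (by tauto),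
      proj_proj (L' := [letterZ (ρ b), letterZ (ρ (a + 1))]) (by simp [h₂]) (by simp) rfl]
  refine ⟨fun hi => getLast?_proj_of_separated hnd ?_ ?_,
    fun hi => head?_proj_of_separated hnd ?_ ?_⟩
  · rw [f₁, pairPattern, if_pos hi, if_neg (halt.1 hi)]; rfl
  · rw [f₂, pairPattern, if_neg (halt.1 hi), if_pos (hsame.1 hi)]; rfl
  · rw [f₁, pairPattern, if_neg hi, if_pos (by tauto)]; rfl
  · rw [f₂, pairPattern, if_pos (by tauto), if_neg (by tauto)]; rfl

theorem proj_pair_eq_of_same (hv : AgreeOnFactors xzxyty (hatA n m ρ).toList v.toList)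
    (hρ : IsPQPerm ρ n m) {a b : ℕ} (ha : 1 ≤ a) (hab : a < b) (hb : b ≤ n + m)
    (hsame : ρ a ≤ n ↔ ρ b ≤ n) :
    proj [letterZ (ρ a), letterT (ρ a), letterZ (ρ b), letterT (ρ b)] v.toList =
      pairPattern n (ρ a) (ρ b) := by
  have h := hv.filterMap
    (List.idxOf? · [letterZ (ρ a), letterT (ρ a), letterZ (ρ b), letterT (ρ b)])
  change AgreeOnFactors _ (proj _ _) (proj _ _) at h
  rw [proj_hatA_pair hρ.1 ha hab hb] at h
  have hZ : proj [0, 2] (proj [letterZ (ρ a), letterT (ρ a), letterZ (ρ b), letterT (ρ b)]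
      v.toList) = proj [letterZ (ρ a), letterZ (ρ b)] v.toList :=
    proj_proj (by simp [(hρ.1.injOn.ne_iff ⟨ha, by omega⟩ ⟨by omega, hb⟩).2 hab.ne]) (by simp)
      rfl _
  obtain ⟨hpre, hsuf⟩ := proj_letterZ_pair_of_same hv hρ ha hab hb hsame
  exact eq_pairPattern_of_agreeOnFactors (fun x hx => lt_length_of_mem_proj hx) h
    (fun hi _ => hZ ▸ hpre hi) (fun hi _ => hZ ▸ hsuf hi)

theorem proj_pair_eq (hv : AgreeOnFactors xzxyty (hatA n m ρ).toList v.toList)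
    (hρ : IsPQPerm ρ n m) {a b : ℕ} (ha : 1 ≤ a) (hab : a < b) (hb : b ≤ n + m) :
    proj [letterZ (ρ a), letterT (ρ a), letterZ (ρ b), letterT (ρ b)] v.toList =
      proj [letterZ (ρ a), letterT (ρ a), letterZ (ρ b), letterT (ρ b)] (hatA n m ρ).toList := by
  rw [proj_hatA_pair hρ.1 ha hab hb]
  by_cases hsame : ρ a ≤ n ↔ ρ b ≤ n
  · exact proj_pair_eq_of_same hv hρ ha hab hb hsame
  · exact proj_pair_eq_of_mixed hv hρ.1 ha hab hb (by tauto)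

end Isoterm

theorem statement_7_general (n m : ℕ) (ρ : ℕ → ℕ) (hρ : IsPQPerm ρ n m)
    (v : Word) (hv : ThFM [0, 2, 0, 1, 3, 1] (hatA n m ρ) v) : v = hatA n m ρ := by
  have h : AgreeOnFactors xzxyty (hatA n m ρ).toList v.toList := hv.agreeOnFactors
  refine (FreeMonoid.toList.injective (eq_of_forall_proj_eq (fun x => mem_hatA_of_mem h)
    fun x hx y hy => ?_)).symm
  obtain ⟨a, ha, ha', hxa⟩ := exists_pos_of_mem_hatA hρ.1 hx
  obtain ⟨b, hb, hb', hyb⟩ := exists_pos_of_mem_hatA hρ.1 hy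
  rcases lt_trichotomy a b with hab | rfl | hab
  · exact ⟨_, by simp; tauto, by simp; tauto, (proj_pair_eq h hρ ha hab hb').symm⟩
  · exact ⟨_, by simp; tauto, by simp; tauto, (proj_single_eq h hρ.1 ha ha').symm⟩
  · exact ⟨_, by simp; tauto, by simp; tauto, (proj_pair_eq h hρ hb hab ha').symm⟩

/-- For every `(n,m) ∈ N̂₀²` and every `(n,m)`-permutation `ρ`, the word
`â_{n,m}[ρ]` is an isoterm for the factor monoid `M(xzxyty)`. -/
theorem statement_7 (n m : ℕ) (hnm : InHatN n m) (ρ : ℕ → ℕ) (hρ : IsPQPerm ρ n m)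
    (v : Word) (hv : ThFM [0, 2, 0, 1, 3, 1] (hatA n m ρ) v) : v = hatA n m ρ :=
  statement_7_general n m ρ hρ v hv
end

section
/- Let Σ be a set of identities such that every monoid satisfying all identities of Σ is aperiodic and has central idempotents. Then there exists n ∈ ℕ such that the identities x^n ≈ x^{n+1} and x^n y ≈ y x^n hold in every monoid satisfying Σ (i.e., both identities lie in ⟨Σ⟩). -/
theorem isFIC_ficGen (S : Word → Word → Prop) : IsFIC (ficGen S) where
  refl u := fun θ hθ _ => hθ.refl u
  symm := fun {u v} h θ hθ hle => hθ.symm (h θ hθ hle)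
  trans := fun {u v w} h1 h2 θ hθ hle => hθ.trans (h1 θ hθ hle) (h2 θ hθ hle)
  mul := fun {u₁ v₁ u₂ v₂} h1 h2 θ hθ hle => hθ.mul (h1 θ hθ hle) (h2 θ hθ hle)
  subst := fun σ {u v} h θ hθ hle => hθ.subst σ (h θ hθ hle)

theorem le_ficGen (S : Word → Word → Prop) : RelLe S (ficGen S) :=
  fun u v h θ _ hle => hle u v h

theorem isFIC_MSat (M : Type) [Monoid M] : IsFIC (MSat M) where
  refl _ := fun _ => rfl
  symm := fun {u v} h f => (h f).symm
  trans := fun {u v w} h1 h2 f => (h1 f).trans (h2 f)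
  mul := fun {u₁ v₁ u₂ v₂} h1 h2 f => by rw [map_mul, map_mul, h1 f, h2 f]
  subst := fun σ {u v} h f => h (f.comp σ)

def conOf (S : Word → Word → Prop) : Con Word where
  r := ficGen S
  iseqv := ⟨(isFIC_ficGen S).refl, (isFIC_ficGen S).symm, (isFIC_ficGen S).trans⟩
  mul' := (isFIC_ficGen S).mul

theorem quot_sat (S : Word → Word → Prop) : ∀ u v, S u v → MSat (conOf S).Quotient u v := by
  intro u v huv f
  let c := conOf S
  let σ : Word →* Word := FreeMonoid.lift (fun i => Quotient.out (f (FreeMonoid.of i)))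
  have hfs : f = c.mk'.comp σ := by
    apply FreeMonoid.hom_eq
    intro x
    show f (FreeMonoid.of x) = c.mk' (σ (FreeMonoid.of x))
    have hx : σ (FreeMonoid.of x) = Quotient.out (f (FreeMonoid.of x)) := by
      simp [σ, FreeMonoid.lift_eval_of]
    rw [hx]
    exact (Quotient.out_eq _).symm
  rw [hfs]
  show c.mk' (σ u) = c.mk' (σ v)
  exact (Con.eq c).mpr ((isFIC_ficGen S).subst σ (le_ficGen S u v huv))

theorem exists_pow_eq (Q : Type) [Monoid Q]
    (hap : Aperiodic Q) (a : Q)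
    (hij : ∃ i j, i < j ∧ a ^ i = a ^ j) : ∃ n, 1 ≤ n ∧ a ^ n = a ^ (n + 1) := by
  obtain ⟨i, j, hlt, he⟩ := hij
  set p := j - i with hp
  have hp1 : 1 ≤ p := by omega
  have hip : a ^ i = a ^ (i + p) := by rw [show i + p = j by omega]; exact he
  have L1 : ∀ m, i ≤ m → a ^ m = a ^ (m + p) := by
    intro m hm
    have h1 : a ^ m = a ^ (m - i) * a ^ i := by rw [← pow_add]; congr 1; omega
    rw [h1, hip, ← pow_add]
    congr 1; omega
  have L2 : ∀ m, i ≤ m → ∀ k, a ^ m = a ^ (m + p * k) := by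
    intro m hm k
    induction k with
    | zero => simp
    | succ k ih =>
      rw [ih, L1 (m + p * k) (by omega)]
      congr 1; ring
  have hNi : i ≤ (i + 1) * p := by nlinarith
  have hN1 : 1 ≤ (i + 1) * p := by nlinarith
  set N := (i + 1) * p with hN
  have L3 : ∀ d, a ^ (N + d) = a ^ (N + d % p) := by
    intro d
    conv_lhs => rw [← Nat.mod_add_div d p]
    rw [← Nat.add_assoc]
    exact (L2 (N + d % p) (by omega) _).symm
  have modkey : ∀ s t, a ^ (N + s) * a ^ (N + t) = a ^ (N + (s + N + t) % p) := by
    intro s t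
    rw [← pow_add, show (N + s) + (N + t) = N + (s + N + t) by ring]
    exact L3 _
  have hmodN : ∀ r, r < p → (r + N + 0) % p = r := by
    intro r hr
    rw [Nat.add_zero, hN, Nat.add_mul_mod_self_right, Nat.mod_eq_of_lt hr]
  rcases Nat.lt_or_ge p 2 with hp2 | hp2
  · -- p = 1
    refine ⟨N, hN1, ?_⟩
    have h1 := L1 N hNi
    rwa [show N + p = N + 1 by omega] at h1
  · set G : Set Q := {b | ∃ r, r < p ∧ b = a ^ (N + r)} with hG
    have hmem : ∀ r, r < p → a ^ (N + r) ∈ G := fun r hr => ⟨r, hr, rfl⟩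
    have hclos : ∀ b1 ∈ G, ∀ b2 ∈ G, b1 * b2 ∈ G := by
      rintro _ ⟨r, hr, rfl⟩ _ ⟨s, hs, rfl⟩
      rw [modkey]
      exact hmem _ (Nat.mod_lt _ (by omega))
    have hiden : ∀ b ∈ G, a ^ (N + 0) * b = b ∧ b * a ^ (N + 0) = b := by
      rintro _ ⟨r, hr, rfl⟩
      constructor
      · rw [modkey]
        congr 2
        rw [show 0 + N + r = r + N + 0 by ring]
        exact hmodN r hr
      · rw [modkey]
        congr 2
        exact hmodN r hr
    have hinv : ∀ b ∈ G, ∃ b' ∈ G, b * b' = a ^ (N + 0) ∧ b' * b = a ^ (N + 0) := by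
      rintro _ ⟨r, hr, rfl⟩
      refine ⟨a ^ (N + (p - r) % p), hmem _ (Nat.mod_lt _ (by omega)), ?_, ?_⟩
      · rw [modkey]
        congr 2
        rcases Nat.eq_zero_or_pos r with h0 | h0
        · subst h0
          simp [Nat.mod_self, hN, Nat.add_mul_mod_self_right]
        · rw [Nat.mod_eq_of_lt (by omega : p - r < p),
            show r + N + (p - r) = N + p by omega, hN,
            show (i + 1) * p + p = 0 + p * (i + 2) by ring, Nat.add_mul_mod_self_left, Nat.zero_mod]
      · rw [modkey]
        congr 2
        rcases Nat.eq_zero_or_pos r with h0 | h0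
        · subst h0
          simp [Nat.mod_self, hN, Nat.add_mul_mod_self_right]
        · rw [Nat.mod_eq_of_lt (by omega : p - r < p),
            show p - r + N + r = N + p by omega, hN,
            show (i + 1) * p + p = 0 + p * (i + 2) by ring, Nat.add_mul_mod_self_left, Nat.zero_mod]
    obtain ⟨cc, hcc⟩ := hap G ⟨hclos, a ^ (N + 0), hmem 0 (by omega), hiden, hinv⟩
    have h0 : a ^ (N + 0) = cc := by
      have := hmem 0 (by omega); rw [hcc] at this; exact this
    have h1 : a ^ (N + 1) = cc := by
      have := hmem 1 (by omega); rw [hcc] at this; exact this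
    exact ⟨N, hN1, by rw [← Nat.add_zero N, h0, Nat.add_zero, h1]⟩

theorem count_subst (i : ℕ) (l : Word) :
    FreeMonoid.lift (fun j => if j = i then wx else (1 : Word)) l
      = wx ^ ((FreeMonoid.toList l).count i) := by
  rw [FreeMonoid.lift_apply]
  generalize FreeMonoid.toList l = L
  induction L with
  | nil => simp
  | cons hd tl ih =>
    rw [List.map_cons, List.prod_cons, ih, List.count_cons]
    by_cases hh : hd = i
    · subst hh; simp [pow_succ']
    · simp [hh, Ne.symm hh]

theorem hom_eq_prod {M : Type} [Monoid M] (f : Word →* M) (w : Word) :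
    f w = ((FreeMonoid.toList w).map (fun i => f (FreeMonoid.of i))).prod := by
  conv_lhs => rw [show f = FreeMonoid.lift (fun i => f (FreeMonoid.of i)) from
    FreeMonoid.hom_eq (fun x => (FreeMonoid.lift_eval_of _ _).symm)]
  rw [FreeMonoid.lift_apply]

/-- If every monoid satisfying all identities of `Σ` is aperiodic with
central idempotents, then for some `n ∈ ℕ` the identities `x^n ≈ x^{n+1}` and
`x^n y ≈ y x^n` hold in every monoid satisfying `Σ`. -/
theorem statement_8 (S : Word → Word → Prop)
    (h : ∀ (M : Type) [Monoid M], (∀ u v, S u v → MSat M u v) →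
      Aperiodic M ∧ CentralIdempotents M) :
    ∃ n : ℕ, 1 ≤ n ∧ ∀ (M : Type) [Monoid M], (∀ u v, S u v → MSat M u v) →
      MSat M (wx ^ n) (wx ^ (n + 1)) ∧ MSat M (wx ^ n * wy) (wy * wx ^ n) := by
  classical
  have hsat : ∀ u v, S u v → MSat (conOf S).Quotient u v := quot_sat S
  have hapQ : Aperiodic (conOf S).Quotient := (h _ hsat).1
  set a : (conOf S).Quotient := (conOf S).mk' wx with ha
  by_cases hdist : ∀ i j : ℕ, a ^ i = a ^ j → i = j
  · -- all powers of `a` distinct: `ℤ/2` satisfies `S`, contradicting aperiodicity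
    exfalso
    have hcount : ∀ u v, S u v → ∀ i : ℕ,
        (FreeMonoid.toList u).count i = (FreeMonoid.toList v).count i := by
      intro u v huv i
      have hficuv : ficGen S
          (FreeMonoid.lift (fun j => if j = i then wx else (1 : Word)) u)
          (FreeMonoid.lift (fun j => if j = i then wx else (1 : Word)) v) :=
        (isFIC_ficGen S).subst _ (le_ficGen S u v huv)
      apply hdist
      rw [ha, ← map_pow, ← map_pow, ← count_subst, ← count_subst]
      exact (Con.eq (conOf S)).mpr hficuv
    have hsat2 : ∀ u v, S u v → MSat (Multiplicative (ZMod 2)) u v := by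
      intro u v huv f
      rw [hom_eq_prod f u, hom_eq_prod f v]
      exact List.Perm.prod_eq ((List.perm_iff_count.mpr (hcount u v huv)).map _)
    have hapZ : Aperiodic (Multiplicative (ZMod 2)) := (h _ hsat2).1
    obtain ⟨b, hb⟩ := hapZ Set.univ
      ⟨fun _ _ _ _ => trivial, 1, trivial, fun c _ => ⟨one_mul c, mul_one c⟩,
        fun c _ => ⟨c⁻¹, trivial, mul_inv_cancel c, inv_mul_cancel c⟩⟩
    have h1 : (1 : Multiplicative (ZMod 2)) = b := by
      have := Set.mem_univ (1 : Multiplicative (ZMod 2)); rw [hb] at this; exact this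
    have h2 : (Multiplicative.ofAdd (1 : ZMod 2)) = b := by
      have := Set.mem_univ (Multiplicative.ofAdd (1 : ZMod 2)); rw [hb] at this; exact this
    have h3 : (1 : Multiplicative (ZMod 2)) = Multiplicative.ofAdd (1 : ZMod 2) :=
      h1.trans h2.symm
    have h4 : (0 : ZMod 2) = 1 := congrArg Multiplicative.toAdd h3
    exact absurd h4 (by decide)
  · -- some powers of `a` coincide: use aperiodicity of the quotient
    push_neg at hdist
    obtain ⟨i, j, hij, hne⟩ := hdist
    have hex : ∃ i j, i < j ∧ a ^ i = a ^ j := by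
      rcases Nat.lt_or_ge i j with hlt | hge
      · exact ⟨i, j, hlt, hij⟩
      · exact ⟨j, i, by omega, hij.symm⟩
    obtain ⟨n, hn1, hpow⟩ := exists_pow_eq _ hapQ a hex
    have hfic : ficGen S (wx ^ n) (wx ^ (n + 1)) := by
      apply (Con.eq (conOf S)).mp
      have : (conOf S).mk' (wx ^ n) = (conOf S).mk' (wx ^ (n + 1)) := by
        rw [map_pow, map_pow, ← ha]; exact hpow
      exact this
    refine ⟨n, hn1, ?_⟩
    intro M _ hM
    have h1 : MSat M (wx ^ n) (wx ^ (n + 1)) := hfic (MSat M) (isFIC_MSat M) hM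
    refine ⟨h1, ?_⟩
    intro f
    have hb : (f wx) ^ n = (f wx) ^ (n + 1) := by
      have := h1 f; rwa [map_pow, map_pow] at this
    have hk : ∀ k, (f wx) ^ (n + k) = (f wx) ^ n := by
      intro k
      induction k with
      | zero => rfl
      | succ k ih =>
        calc (f wx) ^ (n + (k + 1)) = (f wx) ^ (n + 1) * (f wx) ^ k := by
              rw [← pow_add]; congr 1; omega
          _ = (f wx) ^ n * (f wx) ^ k := by rw [← hb]
          _ = (f wx) ^ (n + k) := by rw [← pow_add]
          _ = (f wx) ^ n := ih
    have hidem : (f wx) ^ n * (f wx) ^ n = (f wx) ^ n := by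
      rw [← pow_add]; exact hk n
    have hcentral := (h M hM).2 _ hidem (f wy)
    simp only [map_mul, map_pow]
    exact hcentral
end

section
/- Let θ be a fully invariant congruence on F containing, for some n ∈ ℕ, the identities x^n ≈ x^{n+1} and x^n y ≈ y x^n. If the word xy is not an isoterm for θ (i.e., (xy, w) ∈ θ for some word w ≠ xy; equivalently, the factor monoid M(xy) does not lie in the corresponding variety), then (xy, yx) ∈ θ, i.e., the corresponding variety is commutative. -/
-- counting lemma
lemma lift_countP (p : ℕ → Bool) (l : List ℕ) :
    FreeMonoid.lift (fun i => if p i then wx else 1) (FreeMonoid.ofList l)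
      = wx ^ l.countP p := by
  induction l with
  | nil => rfl
  | cons a l ih =>
    rw [FreeMonoid.ofList_cons, map_mul, FreeMonoid.lift_eval_of, ih, List.countP_cons]
    by_cases h : p a
    · simp [h, pow_succ']
    · simp [h]

section
variable {θ : Word → Word → Prop} (hθ : IsFIC θ)
include hθ

-- pow ladder: from x^n ≈ x^{n+1} get x^n ≈ x^m for m ≥ n
lemma ladder (n : ℕ) (hx : θ (wx ^ n) (wx ^ (n + 1))) :
    ∀ m, n ≤ m → θ (wx ^ n) (wx ^ m) := by
  intro m hm
  induction m with
  | zero => have : n = 0 := Nat.le_zero.mp hm; subst this; exact hθ.refl _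
  | succ m ih =>
    rcases Nat.lt_or_ge n (m+1) with hlt | hge
    · have hnm : n ≤ m := Nat.lt_succ_iff.mp hlt
      have h1 : θ (wx ^ n) (wx ^ m) := ih hnm
      have h2 : θ (wx ^ (n+1)) (wx ^ (m+1)) := by
        have := hθ.mul h1 (hθ.refl wx)
        rwa [← pow_succ, ← pow_succ] at this
      exact hθ.trans hx h2
    · have : n = m + 1 := le_antisymm hm hge
      subst this; exact hθ.refl _

-- from θ(x, x^n) derive commutativity
lemma comm_of_xpow (n : ℕ) (hy : θ (wx ^ n * wy) (wy * wx ^ n))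
    (hx : θ wx (wx ^ n)) : θ (wx * wy) (wy * wx) := by
  have h1 : θ (wx * wy) (wx ^ n * wy) := hθ.mul hx (hθ.refl wy)
  have h3 : θ (wy * wx ^ n) (wy * wx) := hθ.mul (hθ.refl wy) (hθ.symm hx)
  exact hθ.trans h1 (hθ.trans hy h3)

-- from θ(x, x^a), a ≥ 2, get θ(x, x^N) for some N ≥ n
lemma grow (a : ℕ) (ha : 2 ≤ a) (hx : θ wx (wx ^ a)) :
    ∀ k, θ wx (wx ^ (1 + k * (a - 1))) := by
  intro k
  induction k with
  | zero => simpa using hθ.refl wx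
  | succ k ih =>
    have step : θ (wx ^ (1 + k * (a - 1))) (wx ^ (1 + (k+1) * (a - 1))) := by
      have := hθ.mul (hθ.refl (wx ^ (k * (a - 1)))) hx
      rw [← pow_succ, ← pow_add] at this
      have e1 : k * (a-1) + 1 = 1 + k * (a-1) := by ring
      have e2 : k * (a - 1) + a = 1 + (k+1) * (a - 1) := by
        have h1 : a - 1 + 1 = a := by omega
        rw [Nat.add_mul, one_mul]
        omega
      rwa [e1, e2] at this
    exact hθ.trans ih step

lemma comm_of_bad_pow (n : ℕ) (hn : 1 ≤ n)
    (hxn : θ (wx ^ n) (wx ^ (n + 1))) (hy : θ (wx ^ n * wy) (wy * wx ^ n))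
    (a : ℕ) (ha : a ≠ 1) (hx : θ wx (wx ^ a)) : θ (wx * wy) (wy * wx) := by
  rcases Nat.lt_or_ge a 2 with h2 | h2
  · -- a = 0 : x ≈ 1
    have ha0 : a = 0 := by omega
    subst ha0
    rw [pow_zero] at hx
    have h1 : θ (wx * wy) wy := by
      have := hθ.mul hx (hθ.refl wy); rwa [one_mul] at this
    have h2 : θ wy (wy * wx) := by
      have := hθ.mul (hθ.refl wy) (hθ.symm hx); rwa [mul_one] at this
    exact hθ.trans h1 h2
  · -- a ≥ 2
    have hN := grow hθ a h2 hx n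
    set N := 1 + n * (a - 1) with hNdef
    have hnN : n ≤ N := by
      have : 1 ≤ a - 1 := by omega
      calc n ≤ n * (a-1) := Nat.le_mul_of_pos_right n (by omega)
        _ ≤ N := by omega
    have : θ wx (wx ^ n) := hθ.trans hN (hθ.symm (ladder hθ n hxn N hnN))
    exact comm_of_xpow hθ n hy this

end

lemma countP_ne_one_len (l : List ℕ) :
    l.countP (fun i => !(i == 1)) + l.count 1 = l.length := by
  induction l with
  | nil => rfl
  | cons a l ih =>
    by_cases h : a = 1 <;> simp [List.count_cons, List.countP_cons, h] <;> omega


/-- Let `θ` be a fully invariant congruence containing `x^n ≈ x^{n+1}`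
and `x^n y ≈ y x^n` for some `n ∈ ℕ`. If the word `xy` is not an isoterm for `θ`, then
`(xy, yx) ∈ θ`. -/
theorem statement_9 (θ : Word → Word → Prop) (hθ : IsFIC θ)
    (hap : ∃ n : ℕ, 1 ≤ n ∧ θ (wx ^ n) (wx ^ (n + 1)) ∧ θ (wx ^ n * wy) (wy * wx ^ n))
    (h : ∃ u : Word, u ≠ wx * wy ∧ θ (wx * wy) u) : θ (wx * wy) (wy * wx) := by
  obtain ⟨n, hn, hxn, hy⟩ := hap
  obtain ⟨u, hne, hu⟩ := h
  set l := FreeMonoid.toList u with hl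
  have key : ∀ p : ℕ → Bool,
      θ ((if p 0 then wx else 1) * (if p 1 then wx else 1)) (wx ^ l.countP p) := by
    intro p
    have h2 := hθ.subst (FreeMonoid.lift (fun i => if p i then wx else 1)) hu
    rw [map_mul] at h2
    rw [show (FreeMonoid.lift (fun i => if p i then wx else 1)) wx
          = (if p 0 then wx else 1) from rfl,
        show (FreeMonoid.lift (fun i => if p i then wx else 1)) wy
          = (if p 1 then wx else 1) from rfl] at h2
    rwa [← FreeMonoid.ofList_toList u, lift_countP, ← hl] at h2
  by_cases h0 : l.count 0 = 1
  · by_cases h1 : l.count 1 = 1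
    · by_cases hm : l.countP (fun i => !(i == 1)) = 1
      · -- length 2 case
        have hlen : l.length = 2 := by
          have := countP_ne_one_len l; omega
        obtain ⟨a, b, hab⟩ := List.length_eq_two.mp hlen
        rw [hab] at h0 h1
        have hueq : u = FreeMonoid.ofList [a, b] := by
          rw [← FreeMonoid.ofList_toList u, ← hl, hab]
        have hcase : (a = 0 ∧ b = 1) ∨ (a = 1 ∧ b = 0) := by
          by_cases ha0 : a = 0 <;> by_cases hb0 : b = 0 <;>
            by_cases ha1 : a = 1 <;> by_cases hb1 : b = 1 <;>
            simp [List.count_cons, ha0, hb0, ha1, hb1] at h0 h1 <;> omega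
        rcases hcase with ⟨ha, hb⟩ | ⟨ha, hb⟩
        · exfalso; apply hne; rw [hueq, ha, hb]; rfl
        · have : u = wy * wx := by rw [hueq, ha, hb]; rfl
          exact this ▸ hu
      · have hk := key (fun i => !(i == 1))
        simp only [show ((0:ℕ) == 1) = false from rfl, show ((1:ℕ) == 1) = true from rfl,
          Bool.not_false, Bool.not_true, if_true, if_false, mul_one] at hk
        exact comm_of_bad_pow hθ n hn hxn hy _ hm hk
    · have hk := key (fun i => i == 1)
      simp only [show ((0:ℕ) == 1) = false from rfl, show ((1:ℕ) == 1) = true from rfl,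
        if_true, if_false, one_mul] at hk
      have : l.countP (fun i => i == 1) = l.count 1 := rfl
      rw [this] at hk
      exact comm_of_bad_pow hθ n hn hxn hy _ h1 hk
  · have hk := key (fun i => i == 0)
    simp only [show ((0:ℕ) == 0) = true from rfl, show ((1:ℕ) == 0) = false from rfl,
      if_true, if_false, mul_one] at hk
    have : l.countP (fun i => i == 0) = l.count 0 := rfl
    rw [this] at hk
    exact comm_of_bad_pow hθ n hn hxn hy _ h0 hk
end

section
/- Let θ₁ and θ₂ be fully invariant congruences on F such that for i = 1,2 there exists n_i ∈ ℕ with the identities x^{n_i} ≈ x^{n_i+1} and x^{n_i} y ≈ y x^{n_i} in θ_i (so each corresponds to a variety of aperiodic monoids with central idempotents). If (xy, yx) ∈ θ₁ ⊔ θ₂, where ⊔ is the join in the lattice of fully invariant congruences (corresponding to the meet of the two varieties), then (xy, yx) ∈ θ₁ or (xy, yx) ∈ θ₂. -/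
/-! A step `xy ≈ v` of a fully invariant congruence satisfying `x^n ≈ x^{n+1}` and
`x^n y ≈ y x^n` either keeps `v = xy` or already forces `xy ≈ yx`: if `v` is not `xy` or
`yx`, some letter occurs in `v` a number of times different from its number of occurrences in
`xy`; collapsing that letter to `x` and all others to `1` yields `x^a ≈ x^b` with `a ≤ 1`,
`a ≠ b`, whence `x ≈ x^n` by aperiodicity and so `xy ≈ x^n y ≈ y x^n ≈ yx`. The join of two
fully invariant congruences is the transitive closure of their union, so a chain from `xy` to
`yx` must contain such a step. -/

open Relation

namespace IsFIC

variable {θ θ₁ θ₂ : Word → Word → Prop}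

theorem pow_add_congr (h : IsFIC θ) {w : Word} {a b : ℕ} (hab : θ (w ^ a) (w ^ b)) (k : ℕ) :
    θ (w ^ (k + a)) (w ^ (k + b)) := by
  simpa only [pow_add] using h.mul (h.refl (w ^ k)) hab

theorem pow_congr_of_le (h : IsFIC θ) {w : Word} {n : ℕ} (hp : θ (w ^ n) (w ^ (n + 1)))
    {m : ℕ} (hm : n ≤ m) : θ (w ^ n) (w ^ m) := by
  induction m, hm using Nat.le_induction with
  | base => exact h.refl _
  | succ m _ ih =>
    have hsucc : θ (w ^ (1 + n)) (w ^ (1 + m)) := h.pow_add_congr ih 1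
    rw [add_comm 1, add_comm 1] at hsucc
    exact h.trans hp hsucc

/-- Iterating `w^a ≈ w^b` pushes the exponent past `n`, where all powers are identified. -/
theorem pow_congr_of_pow_congr_lt (h : IsFIC θ) {w : Word} {n : ℕ}
    (hp : θ (w ^ n) (w ^ (n + 1))) {a b : ℕ} (hab : θ (w ^ a) (w ^ b)) (hlt : a < b) :
    θ (w ^ a) (w ^ n) := by
  obtain ⟨d, rfl⟩ := Nat.exists_eq_add_of_lt hlt
  have hiter : ∀ j, θ (w ^ a) (w ^ (j * (d + 1) + a)) := by
    intro j
    induction j with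
    | zero => simpa using h.refl (w ^ a)
    | succ j ih =>
      have hstep := h.pow_add_congr hab (j * (d + 1))
      rw [show j * (d + 1) + (a + d + 1) = (j + 1) * (d + 1) + a by ring] at hstep
      exact h.trans ih hstep
  exact h.trans (hiter n) (h.symm (h.pow_congr_of_le hp (by nlinarith)))

theorem pow_congr_of_pow_congr_ne (h : IsFIC θ) {w : Word} {n : ℕ}
    (hp : θ (w ^ n) (w ^ (n + 1))) {a b : ℕ} (hab : θ (w ^ a) (w ^ b)) (hne : a ≠ b) :
    θ (w ^ a) (w ^ n) := by
  rcases hne.lt_or_gt with hlt | hgt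
  · exact h.pow_congr_of_pow_congr_lt hp hab hlt
  · exact h.trans hab (h.pow_congr_of_pow_congr_lt hp (h.symm hab) hgt)

theorem pow_congr_of_le_of_pow_congr (h : IsFIC θ) {w : Word} {n : ℕ}
    (hp : θ (w ^ n) (w ^ (n + 1))) {a k : ℕ} (han : θ (w ^ a) (w ^ n)) (hak : a ≤ k) :
    θ (w ^ k) (w ^ n) := by
  have hshift := h.pow_add_congr han (k - a)
  rw [Nat.sub_add_cancel hak] at hshift
  exact h.trans hshift (h.symm (h.pow_congr_of_le hp (Nat.le_add_left n _)))

theorem comm_of_congr_pow (h : IsFIC θ) {u v : Word} {n : ℕ}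
    (hc : θ (u ^ n * v) (v * u ^ n)) (hu : θ u (u ^ n)) : θ (u * v) (v * u) :=
  h.trans (h.mul hu (h.refl v)) (h.trans hc (h.mul (h.refl v) (h.symm hu)))

theorem pow_count_congr (h : IsFIC θ) {u v : Word} (huv : θ u v) (c : ℕ) :
    θ (wx ^ u.toList.count c) (wx ^ v.toList.count c) :=
  h.subst ((powersHom Word wx).comp (FreeMonoid.count c)) huv

theorem comm_or_eq_of_rel_xy (h : IsFIC θ) {n : ℕ} (hp : θ (wx ^ n) (wx ^ (n + 1)))
    (hc : θ (wx ^ n * wy) (wy * wx ^ n)) {v : Word} (hv : θ (wx * wy) v) :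
    θ (wx * wy) (wy * wx) ∨ v = wx * wy := by
  have hxy : (wx * wy).toList = [0, 1] := rfl
  by_cases hcount : ∀ c, v.toList.count c = (wx * wy).toList.count c
  · have hperm : v.toList.Perm [0, 1] := hxy ▸ List.perm_iff_count.mpr hcount
    rcases List.perm_pair.mp hperm with hv01 | hv10
    · exact Or.inr (FreeMonoid.toList.injective hv01)
    · exact Or.inl (FreeMonoid.toList.injective (a₂ := wy * wx) hv10 ▸ hv)
  · push Not at hcount
    obtain ⟨c, hne⟩ := hcount
    have hle : (wx * wy).toList.count c ≤ 1 :=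
      List.nodup_iff_count_le_one.mp (by simp [hxy]) c
    have hx : θ (wx ^ 1) (wx ^ n) := h.pow_congr_of_le_of_pow_congr hp
      (h.pow_congr_of_pow_congr_ne hp (h.pow_count_congr hv c) hne.symm) hle
    exact Or.inl (h.comm_of_congr_pow hc (by simpa only [pow_one] using hx))

theorem transGen_sup (h₁ : IsFIC θ₁) (h₂ : IsFIC θ₂) :
    IsFIC (TransGen fun u v => θ₁ u v ∨ θ₂ u v) where
  refl u := .single (.inl (h₁.refl u))
  symm huv := TransGen.mono (fun _ _ hs => hs.imp h₁.symm h₂.symm) _ _ (TransGen.swap _ _ huv)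
  trans := TransGen.trans
  mul {_ v₁ u₂ _} h₁₂ h₃₄ :=
    (TransGen.lift (· * u₂) (fun _ _ hs => hs.imp (h₁.mul · (h₁.refl u₂))
      (h₂.mul · (h₂.refl u₂))) _ _ h₁₂).trans
    (TransGen.lift (v₁ * ·) (fun _ _ hs => hs.imp (h₁.mul (h₁.refl v₁) ·)
      (h₂.mul (h₂.refl v₁) ·)) _ _ h₃₄)
  subst σ _ _ huv :=
    TransGen.lift σ (fun _ _ hs => hs.imp (h₁.subst σ) (h₂.subst σ)) _ _ huv

theorem transGen_of_ficJoin (h₁ : IsFIC θ₁) (h₂ : IsFIC θ₂) {u v : Word}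
    (huv : ficJoin θ₁ θ₂ u v) : TransGen (fun u v => θ₁ u v ∨ θ₂ u v) u v :=
  huv _ (transGen_sup h₁ h₂) fun _ _ hs => .single hs

end IsFIC

theorem Relation.TransGen.eq_of_forall_rel_eq {α : Type*} {r : α → α → Prop} {a b : α}
    (hstay : ∀ c, r a c → c = a) (hab : TransGen r a b) : b = a := by
  induction hab with
  | single hac => exact hstay _ hac
  | tail _ hbc ih => exact hstay _ (ih ▸ hbc)

/-- If `θ₁`, `θ₂` are fully invariant congruences of varieties of
aperiodic monoids with central idempotents and `(xy, yx)` lies in their join, then it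
lies in `θ₁` or in `θ₂`. -/
theorem statement_10 (θ₁ θ₂ : Word → Word → Prop) (h₁ : IsFIC θ₁) (h₂ : IsFIC θ₂)
    (hap₁ : ∃ n : ℕ, 1 ≤ n ∧ θ₁ (wx ^ n) (wx ^ (n + 1)) ∧ θ₁ (wx ^ n * wy) (wy * wx ^ n))
    (hap₂ : ∃ n : ℕ, 1 ≤ n ∧ θ₂ (wx ^ n) (wx ^ (n + 1)) ∧ θ₂ (wx ^ n * wy) (wy * wx ^ n))
    (h : ficJoin θ₁ θ₂ (wx * wy) (wy * wx)) :
    θ₁ (wx * wy) (wy * wx) ∨ θ₂ (wx * wy) (wy * wx) := by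
  obtain ⟨n₁, -, hp₁, hc₁⟩ := hap₁
  obtain ⟨n₂, -, hp₂, hc₂⟩ := hap₂
  by_contra! hnot
  have hstay : ∀ v, (θ₁ (wx * wy) v ∨ θ₂ (wx * wy) v) → v = wx * wy := by
    rintro v (hv | hv)
    · exact (h₁.comm_or_eq_of_rel_xy hp₁ hc₁ hv).resolve_left hnot.1
    · exact (h₂.comm_or_eq_of_rel_xy hp₂ hc₂ hv).resolve_left hnot.2
  have hyx : wy * wx = wx * wy := (IsFIC.transGen_of_ficJoin h₁ h₂ h).eq_of_forall_rel_eq hstay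
  exact absurd (congrArg FreeMonoid.toList hyx) (by decide)
end

section
/- Let r ∈ ℕ₀ and e₀,…,e_r, f₀,…,f_r ∈ ℕ₀. Set e'_i = e_i mod 2 and f'_i = f_i mod 2 for 1 ≤ i ≤ r, and e'₀ = e₀ + Σ_{i=1}^r (e_i − e'_i), f'₀ = f₀ + Σ_{i=1}^r (f_i − f'_i). Then ⟨{x²y ≈ yx², x^{e₀} ∏_{i=1}^r (t_i x^{e_i}) ≈ x^{f₀} ∏_{i=1}^r (t_i x^{f_i})}⟩ = ⟨{x²y ≈ yx², x^{e'₀} ∏_{i=1}^r (t_i x^{e'_i}) ≈ x^{f'₀} ∏_{i=1}^r (t_i x^{f'_i})}⟩; that is, within the variety A = var{x²y ≈ yx²}, the identity x^{e₀}∏_{i=1}^r(t_i x^{e_i}) ≈ x^{f₀}∏_{i=1}^r(t_i x^{f_i}) is equivalent to one in which every exponent e'_i, f'_i (1 ≤ i ≤ r) is at most 1. -/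
/-! Modulo `x²y ≈ yx²` the square of `x` is central, so every even power `x^{e_i - e'_i}` can be
moved to the front of the word `x^{e₀} ∏ t_i x^{e_i}`. Hence, in the presence of `x²y ≈ yx²`,
each of the two identities is a consequence of the other. -/

theorem pow_mul_prod_eq_of_commute_sq {M : Type*} [Monoid M] {g : M}
    (hg : ∀ m, Commute (g ^ 2) m) (t : ℕ → M) (e : ℕ → ℕ) (a r : ℕ) :
    g ^ a * ((List.range r).map fun i => t (i + 1) * g ^ e (i + 1)).prod =
      g ^ (a + ∑ j ∈ Finset.range r, (e (j + 1) - e (j + 1) % 2)) *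
        ((List.range r).map fun i => t (i + 1) * g ^ (e (i + 1) % 2)).prod := by
  induction r with
  | zero => simp
  | succ r ih =>
    set q := e (r + 1) / 2
    set P := ((List.range r).map fun i => t (i + 1) * g ^ (e (i + 1) % 2)).prod
    have hsplit : g ^ e (r + 1) = (g ^ 2) ^ q * g ^ (e (r + 1) % 2) := by
      rw [← pow_mul, ← pow_add, Nat.div_add_mod]
    have heven : e (r + 1) - e (r + 1) % 2 = 2 * q := by
      have := Nat.div_add_mod (e (r + 1)) 2
      omega
    simp only [List.range_succ, List.map_append, List.prod_append, List.map_singleton,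
      List.prod_singleton, Finset.sum_range_succ]
    rw [← mul_assoc, ih, hsplit, heven, ← add_assoc, pow_add _ _ (2 * q), pow_mul]
    simp only [mul_assoc]
    rw [((hg (t (r + 1))).pow_left q).symm.left_comm, ((hg P).pow_left q).symm.left_comm]

section IsFIC

variable {θ : Word → Word → Prop}

def IsFIC.toCon (hθ : IsFIC θ) : Con Word where
  r := θ
  iseqv := ⟨hθ.refl, hθ.symm, hθ.trans⟩
  mul' := hθ.mul

theorem IsFIC.rel_iff_of_rel (hθ : IsFIC θ) {a a' b b' : Word} (ha : θ a a') (hb : θ b b') :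
    θ a b ↔ θ a' b' :=
  ⟨fun h => hθ.trans (hθ.symm ha) (hθ.trans h hb),
    fun h => hθ.trans ha (hθ.trans h (hθ.symm hb))⟩

theorem IsFIC.sq_mul_comm (hθ : IsFIC θ) (h : θ (wx ^ 2 * wy) (wy * wx ^ 2)) (w : Word) :
    θ (wx ^ 2 * w) (w * wx ^ 2) := by
  simpa [wx, wy, ltr] using
    hθ.subst (FreeMonoid.lift fun n => if n = 1 then w else FreeMonoid.of n) h

def reduceExponents (r : ℕ) (e : ℕ → ℕ) : ℕ → ℕ := fun i =>
  if i = 0 then e 0 + ∑ j ∈ Finset.range r, (e (j + 1) - e (j + 1) % 2) else e i % 2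

theorem IsFIC.wordE_reduceExponents (hθ : IsFIC θ) (h : θ (wx ^ 2 * wy) (wy * wx ^ 2))
    (r : ℕ) (e : ℕ → ℕ) : θ (wordE r e) (wordE r (reduceExponents r e)) := by
  let c := hθ.toCon
  have hcentral : ∀ m : c.Quotient, Commute (c.mk' wx ^ 2) m := by
    intro m
    refine Con.induction_on m fun w => ?_
    have hw : c.mk' (wx ^ 2 * w) = c.mk' (w * wx ^ 2) := c.eq.2 (hθ.sq_mul_comm h w)
    rwa [map_mul, map_mul, map_pow] at hw
  have hquot : c.mk' (wordE r e) = c.mk' (wordE r (reduceExponents r e)) := by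
    simp only [wordE, reduceExponents, map_mul, map_pow, map_list_prod, List.map_map,
      Function.comp_def, ↓reduceIte, Nat.add_one_ne_zero]
    exact pow_mul_prod_eq_of_commute_sq hcentral (fun i => c.mk' (wti i)) e (e 0) r
  exact c.eq.1 hquot

end IsFIC

theorem ficGen_or_congr {p q a b a' b' : Word}
    (h : ∀ θ, IsFIC θ → θ p q → (θ a b ↔ θ a' b')) (u v : Word) :
    ficGen (fun s t => (s = p ∧ t = q) ∨ (s = a ∧ t = b)) u v ↔
      ficGen (fun s t => (s = p ∧ t = q) ∨ (s = a' ∧ t = b')) u v := by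
  constructor <;> intro huv θ hθ hS <;> refine huv θ hθ ?_ <;>
    rintro _ _ (⟨rfl, rfl⟩ | ⟨rfl, rfl⟩)
  · exact hS _ _ (Or.inl ⟨rfl, rfl⟩)
  · exact (h θ hθ (hS _ _ (Or.inl ⟨rfl, rfl⟩))).2 (hS _ _ (Or.inr ⟨rfl, rfl⟩))
  · exact hS _ _ (Or.inl ⟨rfl, rfl⟩)
  · exact (h θ hθ (hS _ _ (Or.inl ⟨rfl, rfl⟩))).1 (hS _ _ (Or.inr ⟨rfl, rfl⟩))

/-- Within `A = var{x²y ≈ yx²}`, the identity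
`x^{e₀}∏(t_i x^{e_i}) ≈ x^{f₀}∏(t_i x^{f_i})` is equivalent to the identity obtained by
replacing each exponent `e_i`, `f_i` (`1 ≤ i ≤ r`) by its residue mod 2 and transferring
the removed even powers to the initial exponent. -/
theorem statement_11 (r : ℕ) (e f : ℕ → ℕ) :
    ∀ u v : Word,
      ficGen (fun a b => (a = wx ^ 2 * wy ∧ b = wy * wx ^ 2) ∨
        (a = wordE r e ∧ b = wordE r f)) u v ↔
      ficGen (fun a b => (a = wx ^ 2 * wy ∧ b = wy * wx ^ 2) ∨
        (a = wordE r (fun i => if i = 0 then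
              e 0 + ∑ j ∈ Finset.range r, (e (j + 1) - e (j + 1) % 2) else e i % 2) ∧
         b = wordE r (fun i => if i = 0 then
              f 0 + ∑ j ∈ Finset.range r, (f (j + 1) - f (j + 1) % 2) else f i % 2))) u v :=
  ficGen_or_congr fun _ hθ hcomm => hθ.rel_iff_of_rel
    (hθ.wordE_reduceExponents hcomm r e) (hθ.wordE_reduceExponents hcomm r f)
end
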